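/- For every quantitative definite clause program P, the pointwise supremum A of the P-chain, defined by A a = sup{A_i a : i ∈ ℕ}, is the minimal model of P: A is a model of P, and for every model B of P and every atom a one has A a ≤ B a. -/
import Mathlib


/-- A quantitative definite clause: a head atom, a list of body atoms,
and a numerical factor. -/
structure QClause (α : Type*) where
  head : α
  body : List α
  factor : ℝ

variable {α : Type*}

/-- The minimum of the values of an interpretation over a list of atoms,
with the empty list yielding 1. -/
def bodyMin (I : α → ℝ) (l : List α) : ℝ := (l.map I).foldr min 1

/-- A quantitative definite clause program: a finite set of clauses whose
factors lie in (0,1]. -/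
def QProgram (P : Set (QClause α)) : Prop :=
  P.Finite ∧ ∀ c ∈ P, 0 < c.factor ∧ c.factor ≤ 1

/-- An interpretation assigns to each atom a value in [0,1]. -/
def IsInterp (I : α → ℝ) : Prop := ∀ a, 0 ≤ I a ∧ I a ≤ 1

/-- An interpretation is a model of `P` iff it is an interpretation and for
every clause `(h, [b₁,…,b_k], f)` of `P`, `I h ≥ f * min {I b₁, …, I b_k}`. -/
def IsModel (P : Set (QClause α)) (I : α → ℝ) : Prop :=
  IsInterp I ∧ ∀ c ∈ P, c.factor * bodyMin I c.body ≤ I c.head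

/-- The `P`-chain: `A₀ a = 0` and
`A_{i+1} a = sup { f * min {A_i b₁, …, A_i b_k} : (a,[b₁,…,b_k],f) ∈ P }`
(in ℝ, `sSup ∅ = 0`). -/
noncomputable def chain (P : Set (QClause α)) : ℕ → α → ℝ
  | 0, _ => 0
  | i + 1, a =>
      sSup {x | ∃ c ∈ P, c.head = a ∧ x = c.factor * bodyMin (chain P i) c.body}

lemma bodyMin_nil (I : α → ℝ) : bodyMin I [] = 1 := rfl

lemma bodyMin_cons (I : α → ℝ) (b : α) (t : List α) :
    bodyMin I (b :: t) = min (I b) (bodyMin I t) := rfl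

lemma bodyMin_le_one (I : α → ℝ) (l : List α) : bodyMin I l ≤ 1 := by
  induction l with
  | nil => simp [bodyMin_nil]
  | cons b t ih => exact le_trans (min_le_right _ _) ih

lemma bodyMin_nonneg {I : α → ℝ} (hI : ∀ a, 0 ≤ I a) (l : List α) : 0 ≤ bodyMin I l := by
  induction l with
  | nil => norm_num [bodyMin_nil]
  | cons b t ih => exact le_min (hI b) ih

lemma bodyMin_mono {I J : α → ℝ} (h : ∀ a, I a ≤ J a) (l : List α) :
    bodyMin I l ≤ bodyMin J l := by
  induction l with
  | nil => simp [bodyMin_nil]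
  | cons b t ih => exact min_le_min (h b) ih

lemma chainSet_bddAbove (P : Set (QClause α)) (hP : QProgram P) (i : ℕ) (a : α) :
    BddAbove {x | ∃ c ∈ P, c.head = a ∧ x = c.factor * bodyMin (chain P i) c.body} := by
  apply Set.Finite.bddAbove
  apply Set.Finite.subset (hP.1.image (fun c => c.factor * bodyMin (chain P i) c.body))
  rintro x ⟨c, hc, -, rfl⟩
  exact ⟨c, hc, rfl⟩

lemma chain_nonneg (P : Set (QClause α)) (hP : QProgram P) :
    ∀ i a, 0 ≤ chain P i a := by
  intro i
  induction i with
  | zero => intro a; simp [chain]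
  | succ i ih =>
    intro a
    apply Real.sSup_nonneg
    rintro x ⟨c, hc, -, rfl⟩
    exact mul_nonneg (hP.2 c hc).1.le (bodyMin_nonneg ih _)

lemma chain_le_one (P : Set (QClause α)) (hP : QProgram P) :
    ∀ i a, chain P i a ≤ 1 := by
  intro i
  induction i with
  | zero => intro a; simp [chain]
  | succ i ih =>
    intro a
    apply Real.sSup_le _ zero_le_one
    rintro x ⟨c, hc, -, rfl⟩
    calc c.factor * bodyMin (chain P i) c.body ≤ 1 * 1 :=
          mul_le_mul (hP.2 c hc).2 (bodyMin_le_one _ _)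
            (bodyMin_nonneg (chain_nonneg P hP i) _) zero_le_one
      _ = 1 := one_mul 1

lemma chain_mono (P : Set (QClause α)) (hP : QProgram P) (a : α) :
    Monotone (fun i => chain P i a) := by
  apply monotone_nat_of_le_succ
  intro i
  induction i generalizing a with
  | zero => exact chain_nonneg P hP 1 a
  | succ i ih =>
    apply Real.sSup_le
    · rintro x ⟨c, hc, hhead, rfl⟩
      calc c.factor * bodyMin (chain P i) c.body
          ≤ c.factor * bodyMin (chain P (i+1)) c.body :=
            mul_le_mul_of_nonneg_left (bodyMin_mono (fun b => ih b) _) (hP.2 c hc).1.le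
        _ ≤ chain P (i+2) a :=
            le_csSup (chainSet_bddAbove P hP (i+1) a) ⟨c, hc, hhead, rfl⟩
    · exact chain_nonneg P hP (i+2) a

lemma chain_bdd (P : Set (QClause α)) (hP : QProgram P) (a : α) :
    BddAbove (Set.range fun i => chain P i a) := by
  refine ⟨1, ?_⟩
  rintro x ⟨i, rfl⟩
  exact chain_le_one P hP i a

lemma min_ciSup_le {x y : ℕ → ℝ} (hx : Monotone x) (hy : Monotone y)
    (hbx : BddAbove (Set.range x)) (hby : BddAbove (Set.range y)) :
    min (⨆ i, x i) (⨆ i, y i) ≤ ⨆ i, min (x i) (y i) := by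
  have hb : BddAbove (Set.range fun i => min (x i) (y i)) := by
    obtain ⟨M, hM⟩ := hbx
    refine ⟨M, ?_⟩
    rintro z ⟨i, rfl⟩
    exact le_trans (min_le_left _ _) (hM ⟨i, rfl⟩)
  refine le_of_forall_pos_le_add (fun ε hε => ?_)
  obtain ⟨i, hi⟩ := exists_lt_of_lt_ciSup (show (⨆ i, x i) - ε < ⨆ i, x i by linarith)
  obtain ⟨j, hj⟩ := exists_lt_of_lt_ciSup (show (⨆ i, y i) - ε < ⨆ i, y i by linarith)
  have h1 : (⨆ i, x i) ≤ x (max i j) + ε := by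
    have := hx (le_max_left i j); linarith
  have h2 : (⨆ i, y i) ≤ y (max i j) + ε := by
    have := hy (le_max_right i j); linarith
  calc min (⨆ i, x i) (⨆ i, y i) ≤ min (x (max i j) + ε) (y (max i j) + ε) :=
        min_le_min h1 h2
    _ = min (x (max i j)) (y (max i j)) + ε := by rw [min_add_add_right]
    _ ≤ (⨆ i, min (x i) (y i)) + ε := by
        have := le_ciSup hb (max i j); linarith

lemma bodyMin_iSup_le (P : Set (QClause α)) (hP : QProgram P) (l : List α) :
    bodyMin (fun a => ⨆ i, chain P i a) l ≤ ⨆ i, bodyMin (chain P i) l := by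
  induction l with
  | nil =>
    simp only [bodyMin_nil]
    exact le_of_eq (ciSup_const (a := (1:ℝ))).symm
  | cons b t ih =>
    rw [bodyMin_cons]
    have hmono : Monotone (fun i => bodyMin (chain P i) t) :=
      fun i j hij => bodyMin_mono (fun a => chain_mono P hP a hij) t
    have hbdd : BddAbove (Set.range fun i => bodyMin (chain P i) t) := by
      refine ⟨1, ?_⟩; rintro z ⟨i, rfl⟩; exact bodyMin_le_one _ _
    calc min ((fun a => ⨆ i, chain P i a) b) (bodyMin (fun a => ⨆ i, chain P i a) t)
        ≤ min (⨆ i, chain P i b) (⨆ i, bodyMin (chain P i) t) :=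
          min_le_min (le_refl _) ih
      _ ≤ ⨆ i, min (chain P i b) (bodyMin (chain P i) t) :=
          min_ciSup_le (chain_mono P hP b) hmono (chain_bdd P hP b) hbdd
      _ = ⨆ i, bodyMin (chain P i) (b :: t) := rfl

/-- The pointwise supremum of the `P`-chain is the minimal model of `P`. -/
theorem stmt_7 (P : Set (QClause α)) (hP : QProgram P) :
    IsModel P (fun a => ⨆ i : ℕ, chain P i a) ∧
      ∀ B : α → ℝ, IsModel P B → ∀ a : α, (⨆ i : ℕ, chain P i a) ≤ B a := by
  constructor
  · constructor
    · intro a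
      constructor
      · have := le_ciSup (chain_bdd P hP a) 0
        simpa [chain] using this
      · exact ciSup_le (fun i => chain_le_one P hP i a)
    · intro c hc
      have hf := (hP.2 c hc).1
      calc c.factor * bodyMin (fun a => ⨆ i : ℕ, chain P i a) c.body
          ≤ c.factor * ⨆ i, bodyMin (chain P i) c.body :=
            mul_le_mul_of_nonneg_left (bodyMin_iSup_le P hP c.body) hf.le
        _ = ⨆ i, c.factor * bodyMin (chain P i) c.body := by
            rw [Real.mul_iSup_of_nonneg hf.le]
        _ ≤ ⨆ i : ℕ, chain P i c.head := by
            apply ciSup_le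
            intro i
            have h1 : c.factor * bodyMin (chain P i) c.body ≤ chain P (i+1) c.head :=
              le_csSup (chainSet_bddAbove P hP i c.head) ⟨c, hc, rfl, rfl⟩
            exact le_trans h1 (le_ciSup (chain_bdd P hP c.head) (i+1))
  · intro B hB a
    have key : ∀ i a, chain P i a ≤ B a := by
      intro i
      induction i with
      | zero => intro a; simpa [chain] using (hB.1 a).1
      | succ i ih =>
        intro a
        apply Real.sSup_le _ (hB.1 a).1
        rintro x ⟨c, hc, hhead, rfl⟩
        calc c.factor * bodyMin (chain P i) c.body
            ≤ c.factor * bodyMin B c.body :=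
              mul_le_mul_of_nonneg_left (bodyMin_mono ih _) (hP.2 c hc).1.le
          _ ≤ B c.head := hB.2 c hc
          _ = B a := by rw [hhead]
    exact ciSup_le (fun i => key i a)
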